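/- If x ∈ ℝ̃_ρ and the exponential series Σ_{n=0}^∞ x^n/n! converges in the sharp topology of ℝ̃_ρ, then x is infinitesimal (|x| ≤ r for all real r > 0). In fact, if x = [x_ε] and x^n/n! → 0 sharply, then |x_ε| ≤ n!·ρ_ε^{1/n} for ε small, for all sufficiently large n ∈ ℕ. -/

import Mathlib

open Filter Topology

namespace RC

def F : Filter ℝ := nhdsWithin 0 (Set.Ioi 0)

/-- A gauge: a net `ρ : (0,1] → (0,1]` with `ρ ε → 0` as `ε → 0⁺`. -/
def Gauge (ρ : ℝ → ℝ) : Prop :=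
  (∀ ε ∈ Set.Ioc (0:ℝ) 1, ρ ε ∈ Set.Ioc (0:ℝ) 1) ∧ Tendsto ρ F (nhds 0)

/-- ρ-moderate real nets: `x_ε = O(ρ_ε^{-N})` for some `N`. -/
def Mod (ρ x : ℝ → ℝ) : Prop :=
  ∃ N : ℕ, ∃ C : ℝ, ∀ᶠ ε in F, |x ε| ≤ C * (ρ ε)⁻¹ ^ N

/-- ρ-negligible real nets: `x_ε = O(ρ_ε^{N})` for all `N`. -/
def Ngl (ρ x : ℝ → ℝ) : Prop :=
  ∀ N : ℕ, ∃ C : ℝ, ∀ᶠ ε in F, |x ε| ≤ C * ρ ε ^ N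

def Eqv (ρ x y : ℝ → ℝ) : Prop := Ngl ρ (x - y)

/-- The order on generalized numbers, at the level of representatives. -/
def leG (ρ x y : ℝ → ℝ) : Prop :=
  ∀ x', Mod ρ x' → Eqv ρ x' x → ∃ y', Mod ρ y' ∧ Eqv ρ y' y ∧ ∀ᶠ ε in F, x' ε ≤ y' ε

/-- Invertibility in the quotient ring, at the level of representatives. -/
def InvG (ρ x : ℝ → ℝ) : Prop := ∃ y, Mod ρ y ∧ Eqv ρ (x * y) 1

def ltG (ρ x y : ℝ → ℝ) : Prop := leG ρ x y ∧ InvG ρ (y - x)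

def posInv (ρ r : ℝ → ℝ) : Prop := ltG ρ 0 r

def ModC (ρ : ℝ → ℝ) (x : ℝ → ℂ) : Prop :=
  ∃ N : ℕ, ∃ C : ℝ, ∀ᶠ ε in F, ‖x ε‖ ≤ C * (ρ ε)⁻¹ ^ N

def NglC (ρ : ℝ → ℝ) (x : ℝ → ℂ) : Prop :=
  ∀ N : ℕ, ∃ C : ℝ, ∀ᶠ ε in F, ‖x ε‖ ≤ C * ρ ε ^ N

def EqvC (ρ : ℝ → ℝ) (x y : ℝ → ℂ) : Prop := NglC ρ (x - y)

def InvC (ρ : ℝ → ℝ) (x : ℝ → ℂ) : Prop := ∃ y, ModC ρ y ∧ EqvC ρ (x * y) 1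

noncomputable def absC (x : ℝ → ℂ) : ℝ → ℝ := fun ε => ‖x ε‖

/-- Convergence of a sequence of generalized numbers in the sharp topology. -/
def SharpTendsto (ρ : ℝ → ℝ) (u : ℕ → ℝ → ℝ) (L : ℝ → ℝ) : Prop :=
  ∀ q : ℕ, ∃ M : ℕ, ∀ n ≥ M, ltG ρ (fun ε => |u n ε - L ε|) (fun ε => ρ ε ^ q)

/-
Sharp convergence to `L` below `ρ^q` can be read off a representative: up to a negligible
net, `|u n - L| ≤ ρ^q`, hence `|u n - L| ≤ 2ρ^q` for small `ε`. For the exponential series,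
successive partial sums then differ by `|x^n/n!| ≤ 4ρ`, so `|x|^n ≤ 4 n! ρ ≤ (n!)^n ρ` once `n`
is large, i.e. `|x| ≤ n! ρ^{1/n}`; the right-hand side tends to `0` with `ε` for fixed `n`.
-/

lemma eventually_mem_Ioc : ∀ᶠ ε in F, ε ∈ Set.Ioc (0:ℝ) 1 := by
  have h_pos : Set.Ioi (0:ℝ) ∈ F := self_mem_nhdsWithin
  have h_le : Set.Iic (1:ℝ) ∈ F := nhdsWithin_le_nhds (Iic_mem_nhds one_pos)
  filter_upwards [h_pos, h_le] with ε hε hε' using ⟨hε, hε'⟩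

section Gauge

variable {ρ : ℝ → ℝ}

lemma Gauge.eventually_mem_Ioc (hρ : Gauge ρ) : ∀ᶠ ε in F, ρ ε ∈ Set.Ioc (0:ℝ) 1 :=
  RC.eventually_mem_Ioc.mono fun ε h => hρ.1 ε h

lemma Gauge.eventually_mul_pow_succ_le (hρ : Gauge ρ) (C : ℝ) (q : ℕ) :
    ∀ᶠ ε in F, C * ρ ε ^ (q + 1) ≤ ρ ε ^ q := by
  have hCρ : Tendsto (fun ε => C * ρ ε) F (𝓝 0) := by simpa using hρ.2.const_mul C
  filter_upwards [hCρ.eventually_le_const one_pos, hρ.eventually_mem_Ioc] with ε h hρε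
  calc C * ρ ε ^ (q + 1) = ρ ε ^ q * (C * ρ ε) := by ring
    _ ≤ ρ ε ^ q * 1 := mul_le_mul_of_nonneg_left h (pow_nonneg hρε.1.le q)
    _ = ρ ε ^ q := mul_one _

lemma Gauge.tendsto_mul_rpow (hρ : Gauge ρ) (c : ℝ) {p : ℝ} (hp : 0 < p) :
    Tendsto (fun ε => c * ρ ε ^ p) F (𝓝 0) := by
  simpa [Real.zero_rpow hp.ne'] using (hρ.2.rpow_const (Or.inr hp.le)).const_mul c

end Gauge

section Moderate

open Asymptotics

variable {ρ u v : ℝ → ℝ}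

lemma mod_iff_isBigO (hρ : Gauge ρ) : Mod ρ u ↔ ∃ N : ℕ, u =O[F] fun ε => (ρ ε)⁻¹ ^ N := by
  have h_norm : ∀ N : ℕ, ∀ᶠ ε in F, ‖(ρ ε)⁻¹ ^ N‖ = (ρ ε)⁻¹ ^ N := fun N =>
    hρ.eventually_mem_Ioc.mono fun ε h => by
      rw [Real.norm_eq_abs, abs_of_pos (pow_pos (inv_pos.2 h.1) N)]
  simp only [Mod, isBigO_iff, Real.norm_eq_abs]
  refine exists_congr fun N => exists_congr fun C => ⟨fun h => ?_, fun h => ?_⟩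
  · filter_upwards [h, h_norm N] with ε h1 h2
    rwa [← Real.norm_eq_abs ((ρ ε)⁻¹ ^ N), h2]
  · filter_upwards [h, h_norm N] with ε h1 h2
    rwa [← Real.norm_eq_abs ((ρ ε)⁻¹ ^ N), h2] at h1

lemma isBigO_inv_pow_of_le (hρ : Gauge ρ) {N M : ℕ} (h : N ≤ M) :
    (fun ε => (ρ ε)⁻¹ ^ N) =O[F] fun ε => (ρ ε)⁻¹ ^ M := by
  refine IsBigO.of_bound 1 (hρ.eventually_mem_Ioc.mono fun ε hε => ?_)
  have h_one : 1 ≤ (ρ ε)⁻¹ := one_le_inv_iff₀.2 hε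
  simp only [Real.norm_eq_abs, one_mul, abs_pow, abs_of_pos (inv_pos.2 hε.1)]
  exact pow_le_pow_right₀ h_one h

lemma mod_const (c : ℝ) : Mod ρ fun _ => c :=
  ⟨0, |c|, Eventually.of_forall fun _ => by simp⟩

lemma Mod.add (hρ : Gauge ρ) (hu : Mod ρ u) (hv : Mod ρ v) : Mod ρ fun ε => u ε + v ε := by
  obtain ⟨N, hN⟩ := (mod_iff_isBigO hρ).1 hu
  obtain ⟨M, hM⟩ := (mod_iff_isBigO hρ).1 hv
  exact (mod_iff_isBigO hρ).2 ⟨max N M,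
    (hN.trans (isBigO_inv_pow_of_le hρ (le_max_left N M))).add
      (hM.trans (isBigO_inv_pow_of_le hρ (le_max_right N M)))⟩

lemma Mod.mul (hρ : Gauge ρ) (hu : Mod ρ u) (hv : Mod ρ v) : Mod ρ fun ε => u ε * v ε := by
  obtain ⟨N, hN⟩ := (mod_iff_isBigO hρ).1 hu
  obtain ⟨M, hM⟩ := (mod_iff_isBigO hρ).1 hv
  exact (mod_iff_isBigO hρ).2 ⟨N + M, by simpa only [pow_add] using hN.mul hM⟩

lemma Mod.neg (hu : Mod ρ u) : Mod ρ fun ε => -u ε := by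
  obtain ⟨N, C, h⟩ := hu
  exact ⟨N, C, by simpa only [abs_neg] using h⟩

lemma Mod.abs (hu : Mod ρ u) : Mod ρ fun ε => |u ε| := by
  obtain ⟨N, C, h⟩ := hu
  exact ⟨N, C, by simpa only [abs_abs] using h⟩

lemma Mod.sub (hρ : Gauge ρ) (hu : Mod ρ u) (hv : Mod ρ v) : Mod ρ fun ε => u ε - v ε := by
  simpa only [sub_eq_add_neg] using hu.add hρ hv.neg

lemma Mod.pow (hρ : Gauge ρ) (hu : Mod ρ u) (n : ℕ) : Mod ρ fun ε => u ε ^ n := by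
  induction n with
  | zero => simpa only [pow_zero] using mod_const 1
  | succ n ih => simpa only [pow_succ] using ih.mul hρ hu

lemma Mod.sum (hρ : Gauge ρ) {ι : Type*} (s : Finset ι) {f : ι → ℝ → ℝ}
    (hf : ∀ i ∈ s, Mod ρ (f i)) : Mod ρ fun ε => ∑ i ∈ s, f i ε := by
  classical
  induction s using Finset.induction_on with
  | empty => simpa only [Finset.sum_empty] using mod_const 0
  | insert i s hi ih =>
    simp only [Finset.sum_insert hi]
    exact (hf i (s.mem_insert_self i)).add hρ
      (ih fun j hj => hf j (Finset.mem_insert_of_mem hj))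

end Moderate

section Order

variable {ρ u v : ℝ → ℝ}

lemma leG_of_eventually_le (hρ : Gauge ρ) (hu : Mod ρ u) (hv : Mod ρ v)
    (h : ∀ᶠ ε in F, u ε ≤ v ε) : leG ρ u v := by
  intro u' hu' hu'u
  refine ⟨fun ε => u' ε - u ε + v ε, (hu'.sub hρ hu).add hρ hv, fun N => ?_, ?_⟩
  · obtain ⟨C, hC⟩ := hu'u N
    exact ⟨C, hC.mono fun ε hε => by simpa using hε⟩
  · exact h.mono fun ε hε => by linarith

lemma leG.exists_eventually_le_add (h : leG ρ u v) (hu : Mod ρ u) (N : ℕ) :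
    ∃ C, ∀ᶠ ε in F, u ε ≤ v ε + C * ρ ε ^ N := by
  obtain ⟨v', -, hv'v, hle⟩ := h u hu fun _ => ⟨0, Eventually.of_forall fun _ => by simp⟩
  obtain ⟨C, hC⟩ := hv'v N
  refine ⟨C, ?_⟩
  filter_upwards [hle, hC] with ε h1 h2
  have := (le_abs_self _).trans h2
  simp only [Pi.sub_apply] at this
  linarith

lemma ltG.eventually_le_two_mul_pow (hρ : Gauge ρ) (hu : Mod ρ u) {q : ℕ}
    (h : ltG ρ u fun ε => ρ ε ^ q) : ∀ᶠ ε in F, u ε ≤ 2 * ρ ε ^ q := by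
  obtain ⟨C, hC⟩ := h.1.exists_eventually_le_add hu (q + 1)
  filter_upwards [hC, hρ.eventually_mul_pow_succ_le C q] with ε h1 h2
  linarith

end Order

lemma SharpTendsto.eventually_abs_sub_le {ρ L : ℝ → ℝ} {u : ℕ → ℝ → ℝ} (hρ : Gauge ρ)
    (hu : ∀ n, Mod ρ (u n)) (hL : Mod ρ L) (h : SharpTendsto ρ u L) (q : ℕ) :
    ∀ᶠ n in atTop, ∀ᶠ ε in F, |u n ε - L ε| ≤ 2 * ρ ε ^ q := by
  obtain ⟨M, hM⟩ := h q
  exact eventually_atTop.2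
    ⟨M, fun n hn => (hM n hn).eventually_le_two_mul_pow hρ ((hu n).sub hρ hL).abs⟩

lemma eventually_abs_sub_succ_le {α : Type*} {l : Filter α} {S : ℕ → α → ℝ} {L c : α → ℝ}
    (h : ∀ᶠ n in atTop, ∀ᶠ a in l, |S n a - L a| ≤ c a) :
    ∀ᶠ n in atTop, ∀ᶠ a in l, |S (n + 1) a - S n a| ≤ 2 * c a := by
  filter_upwards [h, (tendsto_add_atTop_nat 1).eventually h] with n hn hn_succ
  filter_upwards [hn, hn_succ] with a ha ha_succ
  calc |S (n + 1) a - S n a| ≤ |S (n + 1) a - L a| + |L a - S n a| := abs_sub_le _ _ _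
    _ ≤ 2 * c a := by rw [abs_sub_comm (L a)]; linarith

lemma abs_le_factorial_mul_rpow_inv {a t C : ℝ} {n : ℕ} (hn : 2 ≤ n)
    (hC : C ≤ n.factorial) (ht : 0 ≤ t) (h : |a ^ n / (n.factorial : ℝ)| ≤ C * t) :
    |a| ≤ n.factorial * t ^ (n : ℝ)⁻¹ := by
  have hfac : (1 : ℝ) ≤ n.factorial := by exact_mod_cast n.factorial_pos
  have hpow : |a| ^ n ≤ (n.factorial * t ^ (n : ℝ)⁻¹) ^ n := by
    rw [mul_pow, Real.rpow_inv_natCast_pow ht (by omega)]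
    calc |a| ^ n = n.factorial * |a ^ n / (n.factorial : ℝ)| := by
          rw [abs_div, abs_pow, Nat.abs_cast]; field_simp
      _ ≤ n.factorial * (n.factorial * t) := by gcongr; exact h.trans (by gcongr)
      _ = (n.factorial : ℝ) ^ 2 * t := by ring
      _ ≤ (n.factorial : ℝ) ^ n * t := by gcongr
  exact le_of_pow_le_pow_left₀ (by omega) (by positivity) hpow

lemma eventually_abs_le_factorial_mul_rpow_inv {ρ x : ℝ → ℝ} (hρ : Gauge ρ) (C : ℝ)
    (h : ∀ᶠ n in atTop, ∀ᶠ ε in F, |x ε ^ n / (n.factorial : ℝ)| ≤ C * ρ ε) :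
    ∀ᶠ n : ℕ in atTop, ∀ᶠ ε in F, |x ε| ≤ n.factorial * ρ ε ^ (n : ℝ)⁻¹ := by
  filter_upwards [h, eventually_ge_atTop 2, eventually_ge_atTop ⌈C⌉₊] with n hn h2 hC
  have hC' : C ≤ n.factorial :=
    (Nat.le_ceil C).trans (by exact_mod_cast hC.trans n.self_le_factorial)
  filter_upwards [hn, hρ.eventually_mem_Ioc] with ε hε hρε
  exact abs_le_factorial_mul_rpow_inv h2 hC' hρε.1.le hε

/-- If the exponential series of `x` converges sharply, then `x` is infinitesimal; moreover
if `x^n/n! → 0` sharply then `|x_ε| ≤ n! ρ_ε^{1/n}` for ε small and all large `n`. -/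
theorem exp_series_converges_imp_infinitesimal (ρ : ℝ → ℝ) (hρ : Gauge ρ)
    (x : ℝ → ℝ) (hx : Mod ρ x) :
    ((∃ L, Mod ρ L ∧
        SharpTendsto ρ (fun m ε => ∑ n ∈ Finset.range m, x ε ^ n / (n.factorial : ℝ)) L) →
      ∀ r : ℝ, 0 < r → leG ρ (fun ε => |x ε|) fun _ => r) ∧
    (SharpTendsto ρ (fun n ε => x ε ^ n / (n.factorial : ℝ)) 0 →
      ∀ᶠ n : ℕ in atTop, ∀ᶠ ε in F, |x ε| ≤ (n.factorial : ℝ) * ρ ε ^ ((n : ℝ)⁻¹)) := by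
  have h_terms : ∀ n : ℕ, Mod ρ fun ε => x ε ^ n / (n.factorial : ℝ) := fun n => by
    simpa only [div_eq_mul_inv] using (hx.pow hρ n).mul hρ (mod_const _)
  refine ⟨fun ⟨L, hL, hconv⟩ r hr => ?_, fun hconv => ?_⟩
  · have h_sums :=
      hconv.eventually_abs_sub_le hρ (fun m => Mod.sum hρ _ fun n _ => h_terms n) hL 1
    have h_small : ∀ᶠ n in atTop, ∀ᶠ ε in F, |x ε ^ n / (n.factorial : ℝ)| ≤ 4 * ρ ε := by
      filter_upwards [eventually_abs_sub_succ_le h_sums] with n hn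
      filter_upwards [hn] with ε hε
      simp only [Finset.sum_range_succ, add_sub_cancel_left, pow_one] at hε
      linarith
    obtain ⟨n, h_bound, hn⟩ := ((eventually_abs_le_factorial_mul_rpow_inv hρ 4 h_small).and
      (eventually_ge_atTop 1)).exists
    have h_lt : ∀ᶠ ε in F, (n.factorial : ℝ) * ρ ε ^ (n : ℝ)⁻¹ < r :=
      (hρ.tendsto_mul_rpow _ (inv_pos.2 (by exact_mod_cast hn))).eventually_lt_const hr
    refine leG_of_eventually_le hρ hx.abs (mod_const r) ?_
    filter_upwards [h_bound, h_lt] with ε h1 h2 using h1.trans h2.le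
  · refine eventually_abs_le_factorial_mul_rpow_inv hρ 2 ?_
    filter_upwards [hconv.eventually_abs_sub_le hρ h_terms (mod_const 0) 1] with n hn
    simpa using hn

end RC
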